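/- Let L/K be a finite H-Galois extension and L0 an intermediate field. Then J(L0) is a left ideal of H with ε(J(L0)) = 0, and if moreover L0 is an H-subextension, then J(L0) is a two-sided coideal: Δ(J(L0)) ⊆ H ⊗ J(L0) + J(L0) ⊗ H as subspaces of H ⊗_K H. -/

import Mathlib

open TensorProduct

section Defs

variable (K L H : Type) [Field K] [Field L] [Algebra K L] [Ring H] [Bialgebra K H]

/-- `L` is a left `H`-module algebra via `α`. -/
def IsModuleAlgebra (α : H →ₐ[K] Module.End K L) : Prop :=
  (∀ h : H, α h 1 = Coalgebra.counit (R := K) h • (1 : L)) ∧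
  ∀ h : H,
    (α h : L →ₗ[K] L) ∘ₗ LinearMap.mul' K L =
      LinearMap.mul' K L ∘ₗ
        TensorProduct.homTensorHomMap (RingHom.id K) L L L L
          (TensorProduct.map (α.toLinearMap : H →ₗ[K] (L →ₗ[K] L))
            (α.toLinearMap : H →ₗ[K] (L →ₗ[K] L)) (Coalgebra.comul (R := K) h))

noncomputable def lsmulLift (V M : Type) [AddCommGroup V] [Module K V] [AddCommGroup M]
    [Module K M] [Module L M] [IsScalarTower K L M] [SMulCommClass K L M]
    (φ : V →ₗ[K] M) : L ⊗[K] V →ₗ[K] M :=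
  TensorProduct.lift
    (LinearMap.mk₂ K (fun (x : L) (v : V) => x • φ v)
      (fun x x' v => add_smul x x' (φ v))
      (fun c x v => smul_assoc c x (φ v))
      (fun x v v' => by rw [map_add, smul_add])
      (fun c x v => by rw [map_smul, smul_comm]))

/-- The canonical (Galois) map `L ⊗[K] H →ₗ[K] End_K(L)`, `x ⊗ h ↦ (y ↦ x * α h y)`. -/
noncomputable def canMap (α : H →ₐ[K] Module.End K L) : L ⊗[K] H →ₗ[K] (L →ₗ[K] L) :=
  lsmulLift K L H (L →ₗ[K] L) (α.toLinearMap : H →ₗ[K] (L →ₗ[K] L))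

/-- The annihilator `J(L0)` of an intermediate field. -/
def Jann (α : H →ₐ[K] Module.End K L) (L0 : IntermediateField K L) : Submodule K H where
  carrier := {h : H | ∀ x ∈ L0, α h x = 0}
  add_mem' := by
    intro a b ha hb x hx
    simp [map_add, LinearMap.add_apply, ha x hx, hb x hx]
  zero_mem' := by intro x hx; simp
  smul_mem' := by
    intro c a ha x hx
    simp [map_smul, LinearMap.smul_apply, ha x hx]

/-- The map `H →ₗ[K] Hom_K(L0, L)`, `h ↦ (α h)|_{L0}`. -/
def resMap (α : H →ₐ[K] Module.End K L) (L0 : IntermediateField K L) :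
    H →ₗ[K] (↥L0 →ₗ[K] L) where
  toFun h := (α h : L →ₗ[K] L) ∘ₗ L0.val.toLinearMap
  map_add' h h' := by ext x; simp
  map_smul' c h := by ext x; simp

lemma Jann_le_ker (α : H →ₐ[K] Module.End K L) (L0 : IntermediateField K L) :
    Jann K L H α L0 ≤ LinearMap.ker (resMap K L H α L0) := by
  intro h hh
  rw [LinearMap.mem_ker]
  ext x
  exact hh x x.2

/-- The induced canonical map `L ⊗[K] (H / J(L0)) →ₗ[K] Hom_K(L0, L)`. -/
noncomputable def can0 (α : H →ₐ[K] Module.End K L) (L0 : IntermediateField K L) :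
    L ⊗[K] (H ⧸ Jann K L H α L0) →ₗ[K] (↥L0 →ₗ[K] L) :=
  lsmulLift K L (H ⧸ Jann K L H α L0) (↥L0 →ₗ[K] L)
    ((Jann K L H α L0).liftQ (resMap K L H α L0) (Jann_le_ker K L H α L0))

/-- `L0` is an `H`-subextension: the induced canonical map is injective. -/
def IsHSubextension (α : H →ₐ[K] Module.End K L) (L0 : IntermediateField K L) : Prop :=
  Function.Injective (can0 K L H α L0)

end Defs

section Aux

variable (K L H : Type) [Field K] [Field L] [Algebra K L] [Ring H] [Bialgebra K H]

lemma canMap_tmul (α : H →ₐ[K] Module.End K L) (x : L) (h : H) (y : L) :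
    canMap K L H α (x ⊗ₜ[K] h) y = x * α h y := by
  simp [canMap, lsmulLift, smul_eq_mul]

lemma can0_tmul (α : H →ₐ[K] Module.End K L) (L0 : IntermediateField K L)
    (x : L) (h : H) (z : ↥L0) :
    can0 K L H α L0 (x ⊗ₜ[K] ((Jann K L H α L0).mkQ h)) z = x * α h z := by
  simp [can0, lsmulLift, resMap, smul_eq_mul]

lemma can0_lTensor (α : H →ₐ[K] Module.End K L) (L0 : IntermediateField K L)
    (t : L ⊗[K] H) :
    can0 K L H α L0 (LinearMap.lTensor L (Jann K L H α L0).mkQ t)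
      = (canMap K L H α t) ∘ₗ L0.val.toLinearMap := by
  induction t using TensorProduct.induction_on with
  | zero => simp
  | tmul x h =>
    ext z
    simp only [LinearMap.lTensor_tmul, LinearMap.coe_comp, Function.comp_apply,
      AlgHom.toLinearMap_apply, IntermediateField.coe_val]
    rw [can0_tmul, canMap_tmul]
  | add a b ha hb => simp [map_add, ha, hb, LinearMap.add_comp]

lemma canMap_rTensor_comul (α : H →ₐ[K] Module.End K L)
    (hMA : IsModuleAlgebra K L H α) (j : H) (x : L) :
    canMap K L H α ((α.toLinearMap.flip x).rTensor H (Coalgebra.comul (R := K) j))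
      = (α j) ∘ₗ (LinearMap.mulLeft K x) := by
  ext y
  have key : ∀ t : H ⊗[K] H,
      canMap K L H α ((α.toLinearMap.flip x).rTensor H t) y
        = LinearMap.mul' K L (TensorProduct.homTensorHomMap (RingHom.id K) L L L L
            (TensorProduct.map (α.toLinearMap : H →ₗ[K] (L →ₗ[K] L))
              (α.toLinearMap : H →ₗ[K] (L →ₗ[K] L)) t) (x ⊗ₜ[K] y)) := by
    intro t
    induction t using TensorProduct.induction_on with
    | zero => simp
    | tmul h k =>
      simp only [LinearMap.rTensor_tmul, LinearMap.flip_apply, TensorProduct.map_tmul,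
        TensorProduct.homTensorHomMap_apply, LinearMap.mul'_apply,
        AlgHom.toLinearMap_apply]
      rw [canMap_tmul]
    | add a b ha hb => simp [map_add, ha, hb]
  have h2 := congrArg (fun f : L ⊗[K] L →ₗ[K] L => f (x ⊗ₜ[K] y)) (hMA.2 j)
  simp only [LinearMap.coe_comp, Function.comp_apply, LinearMap.mul'_apply] at h2
  simp only [LinearMap.coe_comp, Function.comp_apply, LinearMap.mulLeft_apply]
  rw [key, ← h2]

lemma eval_rTensorHomToHomRTensor (L0 : IntermediateField K L)
    (Q : Type) [AddCommGroup Q] [Module K Q]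
    (t : (↥L0 →ₗ[K] L) ⊗[K] Q) (c : ↥L0) :
    TensorProduct.rTensorHomToHomRTensor (RingHom.id K) ↥L0 L Q t c
      = (LinearMap.applyₗ c).rTensor Q t := by
  induction t using TensorProduct.induction_on with
  | zero => simp
  | tmul f q => simp [TensorProduct.rTensorHomToHomRTensor_apply]
  | add a b ha hb => simp [map_add, ha, hb]

end Aux

section Statement

variable (K L H : Type) [Field K] [Field L] [Algebra K L] [Ring H] [Bialgebra K H]

/-- For a finite `H`-Galois extension `L/K` and an intermediate field `L0`, the annihilator
`J(L0)` is a left ideal on which the counit vanishes; if moreover `L0` is an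
`H`-subextension, then `J(L0)` is a two-sided coideal. -/
theorem Jann_isLeftIdeal_counit_eq_zero_and_coideal [FiniteDimensional K L]
    [FiniteDimensional K H]
    (α : H →ₐ[K] Module.End K L) (hMA : IsModuleAlgebra K L H α)
    (hGal : Function.Bijective (canMap K L H α))
    (L0 : IntermediateField K L) :
    (∀ h : H, ∀ j ∈ Jann K L H α L0, h * j ∈ Jann K L H α L0) ∧
    (∀ j ∈ Jann K L H α L0, Coalgebra.counit (R := K) j = 0) ∧
    (IsHSubextension K L H α L0 →
      ∀ j ∈ Jann K L H α L0, Coalgebra.comul (R := K) j ∈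
        LinearMap.range
            (TensorProduct.map (LinearMap.id : H →ₗ[K] H) (Jann K L H α L0).subtype) ⊔
          LinearMap.range
            (TensorProduct.map (Jann K L H α L0).subtype (LinearMap.id : H →ₗ[K] H))) := by
  classical
  refine ⟨?_, ?_, ?_⟩
  · intro h j hj
    show ∀ x ∈ L0, α (h * j) x = 0
    intro x hx
    rw [map_mul, Module.End.mul_apply, hj x hx, map_zero]
  · intro j hj
    have h1 : α j 1 = Coalgebra.counit (R := K) j • (1 : L) := hMA.1 j
    rw [hj 1 (one_mem L0)] at h1
    have := (smul_eq_zero.mp h1.symm).resolve_right one_ne_zero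
    exact this
  · intro hsub j hj
    set J : Submodule K H := Jann K L H α L0 with hJdef
    have hsub' : Function.Injective (can0 K L H α L0) := hsub
    have hker := TensorProduct.map_ker (LinearMap.exact_subtype_mkQ J)
      (Submodule.mkQ_surjective J) (LinearMap.exact_subtype_mkQ J)
      (Submodule.mkQ_surjective J)
    -- key step: for x ∈ L0, (β_x ⊗ π)(Δ j) = 0
    have hstep : ∀ x : L, x ∈ L0 →
        TensorProduct.map (α.toLinearMap.flip x) J.mkQ (Coalgebra.comul (R := K) j)
          = 0 := by
      intro x hx
      have hfac : TensorProduct.map (α.toLinearMap.flip x) J.mkQ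
            (Coalgebra.comul (R := K) j)
          = LinearMap.lTensor L J.mkQ
              ((α.toLinearMap.flip x).rTensor H (Coalgebra.comul (R := K) j)) := by
        rw [← LinearMap.lTensor_comp_rTensor]
        rfl
      rw [hfac]
      apply hsub'
      rw [map_zero, can0_lTensor, canMap_rTensor_comul K L H α hMA]
      ext z
      simp only [LinearMap.coe_comp, Function.comp_apply, AlgHom.toLinearMap_apply,
        IntermediateField.coe_val, LinearMap.mulLeft_apply, LinearMap.zero_apply]
      exact hj _ (mul_mem hx z.2)
    -- deduce (π ⊗ π)(Δ j) = 0
    have hρker : LinearMap.ker (resMap K L H α L0) ≤ J := by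
      intro h hh
      show ∀ x ∈ L0, α h x = 0
      intro x hx
      have := congrArg (fun f : ↥L0 →ₗ[K] L => f ⟨x, hx⟩) (LinearMap.mem_ker.mp hh)
      simpa [resMap] using this
    set ρ : (H ⧸ J) →ₗ[K] (↥L0 →ₗ[K] L) :=
      J.liftQ (resMap K L H α L0) (Jann_le_ker K L H α L0) with hρdef
    have hρinj : Function.Injective ρ := by
      rw [← LinearMap.ker_eq_bot]
      exact Submodule.ker_liftQ_eq_bot _ _ _ hρker
    have hrTinj : Function.Injective (ρ.rTensor (H ⧸ J)) :=
      Module.Flat.rTensor_preserves_injective_linearMap ρ hρinj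
    have hcomp : ∀ (t : H ⊗[K] H) (c : ↥L0),
        TensorProduct.rTensorHomToHomRTensor (RingHom.id K) ↥L0 L (H ⧸ J)
            (ρ.rTensor (H ⧸ J) (TensorProduct.map J.mkQ J.mkQ t)) c
          = TensorProduct.map (α.toLinearMap.flip (c : L)) J.mkQ t := by
      intro t c
      induction t using TensorProduct.induction_on with
      | zero => simp
      | tmul h k =>
        simp [TensorProduct.rTensorHomToHomRTensor_apply, hρdef, resMap]
      | add a b ha hb => simp only [map_add, LinearMap.add_apply, ha, hb]
    have hzero : TensorProduct.map J.mkQ J.mkQ (Coalgebra.comul (R := K) j) = 0 := by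
      apply hrTinj
      rw [map_zero]
      apply (rTensorHomEquivHomRTensor K ↥L0 L (H ⧸ J)).injective
      rw [map_zero, rTensorHomEquivHomRTensor_apply]
      ext c
      rw [LinearMap.zero_apply, hcomp, hstep (c : L) c.2]
    have hmem : Coalgebra.comul (R := K) j
        ∈ LinearMap.ker (TensorProduct.map J.mkQ J.mkQ) := hzero
    rw [hker] at hmem
    exact hmem

end Statement
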